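/- (The side and diameter numbers are the anthyphairetic approximants of √2.) For every natural number n, the n-th convergent of the continued fraction expansion of Real.sqrt 2 equals (q n : ℝ) / (p n), i.e. (GenContFract.of (Real.sqrt 2)).convs n = (q n : ℝ) / (p n). -/
import Mathlib

mutual
/-- The Pythagorean side numbers. -/
def p : ℕ → ℕ
  | 0 => 1
  | n + 1 => p n + q n
/-- The Pythagorean diameter numbers. -/
def q : ℕ → ℕ
  | 0 => 1
  | n + 1 => 2 * p n + q n
end

open GenContFract

lemma sqrt_two_lt_two : Real.sqrt 2 < 2 := by
  nlinarith [Real.sq_sqrt (by norm_num : (2:ℝ) ≥ 0), Real.sqrt_nonneg 2]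

lemma one_lt_sqrt_two : (1:ℝ) < Real.sqrt 2 := by
  nlinarith [Real.sq_sqrt (by norm_num : (2:ℝ) ≥ 0), Real.sqrt_nonneg 2]

lemma floor_sqrt_two : ⌊Real.sqrt 2⌋ = 1 := by
  rw [Int.floor_eq_iff]
  constructor
  · exact_mod_cast one_lt_sqrt_two.le
  · exact_mod_cast sqrt_two_lt_two.trans_le (by norm_num)

lemma fract_sqrt_two : Int.fract (Real.sqrt 2) = Real.sqrt 2 - 1 := by
  rw [Int.fract, floor_sqrt_two]; norm_num

lemma inv_sqrt_two_sub_one : (Real.sqrt 2 - 1)⁻¹ = Real.sqrt 2 + 1 := by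
  have h : Real.sqrt 2 - 1 ≠ 0 := by nlinarith [one_lt_sqrt_two]
  field_simp
  nlinarith [Real.sq_sqrt (by norm_num : (2:ℝ) ≥ 0)]

lemma of_sqrt_two_add_one :
    IntFractPair.of ((Real.sqrt 2 - 1)⁻¹ : ℝ) = ⟨2, Real.sqrt 2 - 1⟩ := by
  rw [inv_sqrt_two_sub_one]
  have hfloor : ⌊Real.sqrt 2 + 1⌋ = 2 := by
    rw [Int.floor_eq_iff]
    constructor
    · push_cast; nlinarith [one_lt_sqrt_two]
    · push_cast; nlinarith [sqrt_two_lt_two]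
  simp [IntFractPair.of, Int.fract, hfloor]
  ring

lemma fr_ne : Real.sqrt 2 - 1 ≠ 0 := by nlinarith [one_lt_sqrt_two]

lemma stream_sqrt_two (n : ℕ) :
    IntFractPair.stream (Real.sqrt 2) (n + 1) = some ⟨2, Real.sqrt 2 - 1⟩ := by
  induction n with
  | zero =>
    have h0 : IntFractPair.stream (Real.sqrt 2) 0 = some ⟨1, Real.sqrt 2 - 1⟩ := by
      rw [IntFractPair.stream_zero]
      congr 1
      simp [IntFractPair.of, fract_sqrt_two, floor_sqrt_two]
    rw [IntFractPair.stream_succ_of_some h0 fr_ne, of_sqrt_two_add_one]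
  | succ n ih =>
    rw [IntFractPair.stream_succ_of_some ih fr_ne, of_sqrt_two_add_one]

lemma of_s_sqrt_two (n : ℕ) :
    (GenContFract.of (Real.sqrt 2)).s.get? n = some ⟨1, (2 : ℝ)⟩ := by
  have := get?_of_eq_some_of_succ_get?_intFractPair_stream (stream_sqrt_two n)
  simpa using this

lemma conts_sqrt_two (n : ℕ) :
    (GenContFract.of (Real.sqrt 2)).conts n = ⟨(q n : ℝ), (p n : ℝ)⟩ ∧
    (GenContFract.of (Real.sqrt 2)).conts (n + 1) = ⟨(q (n+1) : ℝ), (p (n+1) : ℝ)⟩ := by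
  induction n with
  | zero =>
    constructor
    · rw [zeroth_cont_eq_h_one, of_h_eq_floor, floor_sqrt_two]
      simp [p, q]
    · rw [first_cont_eq (of_s_sqrt_two 0), of_h_eq_floor, floor_sqrt_two]
      simp [p, q]
      norm_num
  | succ n ih =>
    refine ⟨ih.2, ?_⟩
    rw [conts_recurrence (of_s_sqrt_two (n + 1)) ih.1 ih.2]
    simp only [p, q]
    congr 1 <;> push_cast <;> ring

/-- The side and diameter numbers are the anthyphairetic approximants of √2. -/
theorem convs_sqrt_two (n : ℕ) :
    (GenContFract.of (Real.sqrt 2)).convs n = (q n : ℝ) / (p n) := by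
  rw [conv_eq_conts_a_div_conts_b, (conts_sqrt_two n).1]
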